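/- Let d : ϑ → g be a linear map with dual d^T : g* → ϑ*. The space of vector fields on the Lie 2-group g* ⋉ ϑ* that are multiplicative for both the abelian group and groupoid structures is X¹_bmult(g* ⋉ ϑ*) = End₀(L*) := {(A,B) ∈ End(g*) ⊕ End(ϑ*) : d^T ∘ A = B ∘ d^T}; i.e. a bi-multiplicative vector field is a pair of linear endomorphisms of g* and ϑ* commuting with d^T, acting diagonally with no off-diagonal components. -/

import Mathlib

/-!
STATEMENT 16.  Let `d : ϑ → 𝔤` be a linear map of finite-dimensional vector spaces with
dual `dᵀ : 𝔤* → ϑ*`.  The space of vector fields on the Lie 2-group `𝔤* ⋉ ϑ*` that are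
multiplicative for both the abelian group structure and the groupoid structure is
`End₀(𝔩*) = {(A,B) ∈ End(𝔤*) ⊕ End(ϑ*) : dᵀ ∘ A = B ∘ dᵀ}`:
a bi-multiplicative vector field is a pair of linear endomorphisms of `𝔤*` and `ϑ*`
commuting with `dᵀ`, acting diagonally with no off-diagonal components.
-/

noncomputable section Stmt16

variable (V G : Type*)
  [NormedAddCommGroup V] [NormedSpace ℝ V] [FiniteDimensional ℝ V]
  [NormedAddCommGroup G] [NormedSpace ℝ G] [FiniteDimensional ℝ G]
  (d : V →L[ℝ] G)

/-- `dᵀ : 𝔤* → ϑ*`, `(dᵀ ξ)(u) = -ξ(d u)`. -/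
def dT (ξ : G →L[ℝ] ℝ) : V →L[ℝ] ℝ := -(ξ.comp d)

/-- Multiplicativity of a vector field `X = (X¹, X²)` on `𝔤* × ϑ*` with respect to the
action groupoid structure `𝔤* ⋉ ϑ* ⇒ ϑ*`: `X` is a groupoid morphism to the tangent
groupoid.  The three conditions express compatibility with source, target
(composability of the tangent vectors) and multiplication. -/
def IsGroupoidMultVF
    (X : ((G →L[ℝ] ℝ) × (V →L[ℝ] ℝ)) → ((G →L[ℝ] ℝ) × (V →L[ℝ] ℝ))) : Prop :=
  (∀ (h g : G →L[ℝ] ℝ) (m : V →L[ℝ] ℝ), (X (h + g, m)).2 = (X (g, m)).2) ∧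
  (∀ (g : G →L[ℝ] ℝ) (m : V →L[ℝ] ℝ) (h : G →L[ℝ] ℝ),
    (X (h, dT V G d g + m)).2 = dT V G d (X (g, m)).1 + (X (g, m)).2) ∧
  (∀ (h g : G →L[ℝ] ℝ) (m : V →L[ℝ] ℝ),
    (X (h + g, m)).1 = (X (h, dT V G d g + m)).1 + (X (g, m)).1)

/-- Multiplicativity of a vector field with respect to the abelian group structure of
`𝔤* × ϑ*` (the tangent group multiplication is addition). -/
def IsGroupMultVF
    (X : ((G →L[ℝ] ℝ) × (V →L[ℝ] ℝ)) → ((G →L[ℝ] ℝ) × (V →L[ℝ] ℝ))) : Prop :=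
  ∀ p q : (G →L[ℝ] ℝ) × (V →L[ℝ] ℝ), X (p + q) = X p + X q

theorem bimultiplicative_vector_fields_eq_End₀
    (X : ((G →L[ℝ] ℝ) × (V →L[ℝ] ℝ)) → ((G →L[ℝ] ℝ) × (V →L[ℝ] ℝ)))
    (hX : ContDiff ℝ (⊤ : ℕ∞) X) :
    (IsGroupoidMultVF V G d X ∧ IsGroupMultVF V G X) ↔
      ∃ (A : (G →L[ℝ] ℝ) →ₗ[ℝ] (G →L[ℝ] ℝ)) (B : (V →L[ℝ] ℝ) →ₗ[ℝ] (V →L[ℝ] ℝ)),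
        (∀ ξ : G →L[ℝ] ℝ, dT V G d (A ξ) = B (dT V G d ξ)) ∧
        ∀ (g : G →L[ℝ] ℝ) (m : V →L[ℝ] ℝ), X (g, m) = (A g, B m) := by
  constructor
  · rintro ⟨⟨hs, ht, hm⟩, hadd⟩
    -- additive maps
    have addA : ∀ g g' : G →L[ℝ] ℝ, (X (g + g', 0)).1 = (X (g, 0)).1 + (X (g', 0)).1 := by
      intro g g'
      have := hadd (g, 0) (g', 0)
      simpa [Prod.ext_iff] using congrArg Prod.fst (by simpa using this : X (g + g', 0) = X (g, 0) + X (g', 0))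
    have addB : ∀ m m' : V →L[ℝ] ℝ, (X (0, m + m')).2 = (X (0, m)).2 + (X (0, m')).2 := by
      intro m m'
      have := hadd ((0 : G →L[ℝ] ℝ), m) (0, m')
      simpa [Prod.ext_iff] using congrArg Prod.snd (by simpa using this : X (0, m + m') = X (0, m) + X (0, m'))
    -- second component only depends on m
    have h2 : ∀ (g : G →L[ℝ] ℝ) (m : V →L[ℝ] ℝ), (X (g, m)).2 = (X (0, m)).2 := by
      intro g m
      have := hs (-g) g m
      simpa using this.symm
    -- first component only depends on g
    have h1 : ∀ (g : G →L[ℝ] ℝ) (m : V →L[ℝ] ℝ), (X (g, m)).1 = (X (g, 0)).1 := by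
      intro g m
      have hmul := hm g 0 m
      have hhadd := hadd (g, 0) (0, m)
      have h1' : (X (g + 0, m)).1 = (X (g, 0)).1 + (X (0, m)).1 := by
        have := congrArg Prod.fst hhadd
        simpa [Prod.ext_iff] using this
      -- from hmul : X(g+0,m).1 = X(g, dT 0 + m).1 + X(0,m).1
      have hdT0 : dT V G d (0 : G →L[ℝ] ℝ) = 0 := by
        simp [dT]
      rw [hdT0, zero_add] at hmul
      have := hmul.symm.trans h1'
      -- X(g,m).1 + X(0,m).1 = X(g,0).1 + X(0,m).1
      have := add_right_cancel this
      simpa using this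
    -- continuity
    have hc := hX.continuous
    have hAcont : Continuous fun g : G →L[ℝ] ℝ => (X (g, 0)).1 :=
      (continuous_fst.comp (hc.comp (Continuous.prodMk_left 0)))
    have hBcont : Continuous fun m : V →L[ℝ] ℝ => (X (0, m)).2 :=
      (continuous_snd.comp (hc.comp (Continuous.prodMk_right 0)))
    let Ah : (G →L[ℝ] ℝ) →+ (G →L[ℝ] ℝ) := AddMonoidHom.mk' (fun g => (X (g, 0)).1) addA
    let Bh : (V →L[ℝ] ℝ) →+ (V →L[ℝ] ℝ) := AddMonoidHom.mk' (fun m => (X (0, m)).2) addB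
    let A := Ah.toRealLinearMap hAcont
    let B := Bh.toRealLinearMap hBcont
    have hXval : ∀ (g : G →L[ℝ] ℝ) (m : V →L[ℝ] ℝ), X (g, m) = (A g, B m) := by
      intro g m
      have hA : (A g : G →L[ℝ] ℝ) = (X (g, 0)).1 := rfl
      have hB : (B m : V →L[ℝ] ℝ) = (X (0, m)).2 := rfl
      ext1
      · rw [hA, h1 g m]
      · rw [hB, h2 g m]
    refine ⟨A.toLinearMap, B.toLinearMap, ?_, fun g m => hXval g m⟩
    intro ξ
    have := ht ξ 0 0
    rw [hXval ξ 0, hXval 0 (dT V G d ξ + 0)] at this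
    have hB0 : (B (0 : V →L[ℝ] ℝ) : V →L[ℝ] ℝ) = 0 := map_zero B
    simpa [hB0] using this.symm
  · rintro ⟨A, B, hcomm, hval⟩
    have hdTadd : ∀ ξ η : G →L[ℝ] ℝ, dT V G d (ξ + η) = dT V G d ξ + dT V G d η := by
      intro ξ η
      ext u
      simp [dT]
      ring
    refine ⟨⟨?_, ?_, ?_⟩, ?_⟩
    · intro h g m; rw [hval, hval]
    · intro g m h
      rw [hval, hval]
      simp [hcomm g]
    · intro h g m
      rw [hval, hval, hval]
      simp [map_add]
    · rintro ⟨g, m⟩ ⟨g', m'⟩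
      show X (g + g', m + m') = _
      rw [hval, hval, hval]
      simp [map_add, Prod.ext_iff]

end Stmt16
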